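/- arXiv:math/0210201 — 2 statements merged into one kernel-verified Lean document; each statement's English description precedes it below -/
import Mathlib

section
/- For every integer m ≥ 2, the generalized Polynacci sequence U_n^(m) = trace(A_m^n) has initial values U_0^(m) = m, U_1^(m) = 1, and U_i^(m) = 2^i − 1 for every integer i with 2 ≤ i ≤ m−1. -/
/-!
Column `j` of `A_m` is `e_{j-1}` for `j ≥ 1` and the all-ones vector `𝟙` for `j = 0`. Hence
`A^n e_j = e_{j-n}` for `n ≤ j` and `A^n e_j = A^(n-1-j) 𝟙` for `j < n`. Since
`(A v)_i = v_0 + v_{i+1}`, the entries of `A^k 𝟙` double at every step as long as `i + k < m`,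
so `(A^k 𝟙)_i = 2^k` there. For `1 ≤ n ≤ m` the diagonal of `A^n` is therefore
`2^(n-1), …, 2, 1, 0, …, 0`, whose sum is `2^n - 1`.
-/

/-- The Polynacci matrix `A_m`: first column all ones, first superdiagonal all ones,
all other entries zero (0-indexed). -/
def polyA (m : ℕ) : Matrix (Fin m) (Fin m) ℤ :=
  Matrix.of fun i j => if j.val = 0 then 1 else if j.val = i.val + 1 then 1 else 0

open Matrix Finset

section

variable {m : ℕ}

theorem polyA_mulVec_single_of_val_eq_zero {j : Fin m} (hj : j.val = 0) :
    polyA m *ᵥ Pi.single j 1 = 1 := by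
  ext i
  simp [polyA, hj]

theorem polyA_mulVec_single_of_val_eq_succ {j k : Fin m} (h : j.val = k.val + 1) :
    polyA m *ᵥ Pi.single j 1 = Pi.single k 1 := by
  ext i
  simp [polyA, Pi.single_apply, h, Fin.ext_iff, eq_comm]

theorem polyA_mulVec_apply_of_succ_lt (v : Fin m → ℤ) (i : Fin m) (hi : i.val + 1 < m) :
    (polyA m *ᵥ v) i = v ⟨0, by omega⟩ + v ⟨i.val + 1, hi⟩ := by
  rw [mulVec, dotProduct,
    Fintype.sum_eq_add ⟨0, by omega⟩ ⟨i.val + 1, hi⟩ (by simp [Fin.ext_iff])]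
  · simp [polyA]
  · intro j hj
    simp only [polyA, of_apply, ne_eq, Fin.ext_iff] at hj ⊢
    simp [hj]

theorem polyA_pow_mulVec_single_of_val_eq_add {n : ℕ} {j k : Fin m} (h : j.val = k.val + n) :
    polyA m ^ n *ᵥ Pi.single j 1 = Pi.single k 1 := by
  induction n generalizing j with
  | zero => rw [pow_zero, one_mulVec, Fin.ext (h.trans k.val.add_zero)]
  | succ n ih =>
    rw [pow_succ, ← mulVec_mulVec,
      polyA_mulVec_single_of_val_eq_succ (k := ⟨j.val - 1, by omega⟩) (by simp; omega),
      ih (by simp; omega)]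

theorem polyA_pow_mulVec_single_of_val_lt {n : ℕ} {j : Fin m} (h : j.val < n) :
    polyA m ^ n *ᵥ Pi.single j 1 = polyA m ^ (n - 1 - j.val) *ᵥ 1 := by
  obtain ⟨a, rfl⟩ : ∃ a, n = a + 1 + j.val := ⟨n - 1 - j.val, by omega⟩
  rw [pow_add, pow_succ, ← mulVec_mulVec, ← mulVec_mulVec,
    polyA_pow_mulVec_single_of_val_eq_add (k := ⟨0, by omega⟩) (by simp),
    polyA_mulVec_single_of_val_eq_zero rfl]
  congr 2
  omega

theorem polyA_pow_mulVec_one_apply {k : ℕ} {i : Fin m} (h : i.val + k < m) :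
    (polyA m ^ k *ᵥ 1) i = 2 ^ k := by
  induction k generalizing i with
  | zero => simp
  | succ k ih =>
    rw [pow_succ', ← mulVec_mulVec, polyA_mulVec_apply_of_succ_lt _ _ (by omega),
      ih (by simp; omega), ih (by simp; omega), pow_succ]
    ring

theorem polyA_pow_diag_of_lt {n : ℕ} (hn : n ≤ m) {j : Fin m} (h : j.val < n) :
    (polyA m ^ n) j j = 2 ^ (n - 1 - j.val) := by
  rw [← col_apply (polyA m ^ n), ← mulVec_single_one, polyA_pow_mulVec_single_of_val_lt h,
    polyA_pow_mulVec_one_apply (by omega)]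

theorem polyA_pow_diag_of_le {n : ℕ} (hn : 1 ≤ n) {j : Fin m} (h : n ≤ j.val) :
    (polyA m ^ n) j j = 0 := by
  rw [← col_apply (polyA m ^ n), ← mulVec_single_one,
    polyA_pow_mulVec_single_of_val_eq_add (k := ⟨j.val - n, by omega⟩) (by simp; omega),
    Pi.single_apply, if_neg (by simp [Fin.ext_iff]; omega)]

end

theorem sum_range_two_pow_sub (n : ℕ) : ∑ j ∈ range n, (2 : ℤ) ^ (n - 1 - j) = 2 ^ n - 1 := by
  rw [sum_range_reflect (fun j => (2 : ℤ) ^ j)]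
  simpa using geom_sum_mul (2 : ℤ) n

theorem trace_polyA_pow {m n : ℕ} (hn : 1 ≤ n) (hnm : n ≤ m) :
    (polyA m ^ n).trace = 2 ^ n - 1 := by
  have hdiag : ∀ j : Fin m, (polyA m ^ n) j j = if j.val < n then 2 ^ (n - 1 - j.val) else 0 := by
    intro j
    split_ifs with h
    · exact polyA_pow_diag_of_lt hnm h
    · exact polyA_pow_diag_of_le hn (not_lt.1 h)
  rw [trace, Finset.sum_congr rfl fun j _ => (diag_apply _ j).trans (hdiag j),
    Fin.sum_univ_eq_sum_range (fun j => if j < n then (2 : ℤ) ^ (n - 1 - j) else 0),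
    ← sum_filter, range_eq_Ico, Ico_filter_lt_of_le_right hnm, ← range_eq_Ico,
    sum_range_two_pow_sub]

theorem polynacci_initial_values (m : ℕ) (hm : 2 ≤ m) :
    ((polyA m) ^ 0).trace = (m : ℤ) ∧ ((polyA m) ^ 1).trace = 1 ∧
      ∀ i : ℕ, 2 ≤ i → i ≤ m - 1 → ((polyA m) ^ i).trace = 2 ^ i - 1 := by
  refine ⟨by simp, ?_, fun i h2 hi => trace_polyA_pow (by omega) (by omega)⟩
  simpa using trace_polyA_pow (m := m) le_rfl (by omega)
end

section
/- For every integer m ≥ 1, the inverted generalized Polynacci sequence Û_n^(m) := −trace(B_m^{n+1}) satisfies, as an identity of formal power series over ℤ: (∑_{n≥0} Û_n^(m) x^n) · (1 + x + x² + ⋯ + x^{m−1} − x^m) = 1 + 2x + 3x² + ⋯ + (m−1)x^{m−2} − m x^{m−1}, i.e. the product equals ∑_{j=1}^{m−1} j x^{j−1} − m x^{m−1}. -/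
/-!
Write `tₙ = trace (Bⁿ)`. An explicit formula for `Bᵏ`, `k ≤ m`, shows `B + B² + ⋯ + Bᵐ = 1` and
`trace (Bᵏ) = -1` for `0 < k < m`; so `t₀ = m`, `tₖ = -1` for `0 < k < m`, and
`t_d = t_(d+1) + ⋯ + t_(d+m)` for every `d`. The coefficient of `xⁿ` in the product is the sum
of `-t_(n+1-j)` over `j < m`, `j ≤ n`, plus `t_(n+1-m)` when `n ≥ m`. For `n + 1 < m` every
term is `-tₖ = 1`, giving `n + 1`; otherwise the recurrence collapses the sum to `-t_(n+1-m)`,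
which the `xᵐ` term cancels unless `n + 1 = m`, where `-t₀ = -m` is left.
-/

/-- The matrix `B_m`, the inverse of the Polynacci matrix: `B[1][m] = 1`,
`B[i][m] = -1` for `2 ≤ i ≤ m`, `B[i][i-1] = 1` for `2 ≤ i ≤ m`, other entries zero. -/
def polyB (m : ℕ) : Matrix (Fin m) (Fin m) ℤ :=
  Matrix.of fun i j =>
    if i.val = 0 then (if j.val = m - 1 then 1 else 0)
    else if j.val = m - 1 then -1
    else if j.val + 1 = i.val then 1 else 0

open Finset PowerSeries

lemma sum_range_ite_eq_add_succ {M : Type*} [AddCommMonoid M] (a c n : ℕ) (x : M) :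
    ∑ k ∈ range n, (if c = a + (k + 1) then x else 0) = if a < c ∧ c ≤ a + n then x else 0 := by
  induction n with
  | zero => rw [sum_range_zero, if_neg (by omega)]
  | succ n ih =>
    rw [sum_range_succ, ih]
    split_ifs <;> first | omega | simp

lemma sum_range_ite_le {M : Type*} [AddCommMonoid M] (f : ℕ → M) (m n : ℕ) :
    ∑ j ∈ range m, (if j ≤ n then f j else 0) = ∑ j ∈ range (min m (n + 1)), f j := by
  rw [← sum_filter]
  congr 1
  ext j
  simp only [mem_filter, mem_range]
  omega

lemma one_add_sum_Icc_pow_eq_sum_range {S : Type*} [Semiring S] (x : S) {m : ℕ} (hm : 1 ≤ m) :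
    1 + ∑ j ∈ Icc 1 (m - 1), x ^ j = ∑ j ∈ range m, x ^ j := by
  obtain ⟨m, rfl⟩ := Nat.exists_eq_add_of_le' hm
  rw [range_eq_Ico, sum_eq_sum_Ico_succ_bot (by omega), pow_zero, Nat.add_sub_cancel,
    Ico_add_one_right_eq_Icc]

lemma sum_range_pow_add_succ_eq_pow {A : Type*} [Semiring A] {a : A} {m : ℕ}
    (h : ∑ k ∈ range m, a ^ (k + 1) = 1) (d : ℕ) : ∑ k ∈ range m, a ^ (d + k + 1) = a ^ d := by
  rw [← mul_one (a ^ d), ← h, mul_sum]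
  simp only [← pow_add, add_assoc]

section
variable {R : Type*} [CommRing R]

lemma coeff_mk_mul_geom_sub_X_pow (u : ℕ → R) (m n : ℕ) :
    coeff n (mk u * (∑ j ∈ range m, X ^ j - X ^ m)) =
      ∑ j ∈ range (min m (n + 1)), u (n - j) - if m ≤ n then u (n - m) else 0 := by
  simp only [mul_sub, mul_sum, map_sub, map_sum, coeff_mul_X_pow', coeff_mk, sum_range_ite_le]

lemma coeff_sum_Icc_C_mul_X_pow_sub (m n : ℕ) :
    coeff n (∑ j ∈ Icc 1 (m - 1), C (j : R) * X ^ (j - 1) - C (m : R) * X ^ (m - 1)) =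
      if n + 1 < m then (n + 1 : R) else if n + 1 = m then -(m : R) else 0 := by
  have hterm : ∀ j ∈ Icc 1 (m - 1), coeff n (C (j : R) * X ^ (j - 1)) =
      if n + 1 = j then (j : R) else 0 := by
    intro j hj
    rw [coeff_C_mul_X_pow]
    have := (mem_Icc.1 hj).1
    split_ifs <;> first | rfl | omega
  rw [map_sub, map_sum, sum_congr rfl hterm, sum_ite_eq, coeff_C_mul_X_pow]
  simp only [mem_Icc]
  rcases Nat.eq_zero_or_pos m with rfl | hm
  · simp -- here `X ^ (m - 1) = X ^ 0`, but its coefficient `m` vanishes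
  split_ifs <;> first | omega | (push_cast; ring)

variable {m : ℕ} {t : ℕ → R}

lemma sum_range_sub_add_one_eq (hrec : ∀ d, ∑ k ∈ range m, t (d + k + 1) = t d) {n : ℕ}
    (hn : m ≤ n + 1) : ∑ j ∈ range m, t (n - j + 1) = t (n + 1 - m) := by
  rw [← hrec, ← sum_range_reflect]
  refine sum_congr rfl fun j hj => ?_
  have := mem_range.1 hj
  congr 1
  omega

lemma coeff_mk_neg_mul_geom_sub_X_pow (h0 : t 0 = m) (hlow : ∀ k, 0 < k → k < m → t k = -1)
    (hrec : ∀ d, ∑ k ∈ range m, t (d + k + 1) = t d) (n : ℕ) :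
    coeff n (mk (fun k => -t (k + 1)) * (∑ j ∈ range m, X ^ j - X ^ m)) =
      if n + 1 < m then (n + 1 : R) else if n + 1 = m then -(m : R) else 0 := by
  rw [coeff_mk_mul_geom_sub_X_pow]
  rcases lt_or_ge (n + 1) m with hn | hn
  · have hterms : ∀ j ∈ range (n + 1), -t (n - j + 1) = 1 := fun j hj => by
      rw [hlow _ (by omega) (by have := mem_range.1 hj; omega), neg_neg]
    rw [min_eq_right hn.le, if_neg (show ¬m ≤ n by omega), if_pos hn, sub_zero,
      sum_congr rfl hterms]
    simp
  · rw [min_eq_left hn, sum_neg_distrib, sum_range_sub_add_one_eq hrec hn,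
      if_neg (show ¬n + 1 < m by omega)]
    obtain heq | hlt := hn.eq_or_lt
    · rw [if_neg (show ¬m ≤ n by omega), if_pos heq.symm, show n + 1 - m = 0 by omega, h0,
        sub_zero]
    · rw [if_pos (show m ≤ n by omega), if_neg (show n + 1 ≠ m by omega),
        show n - m + 1 = n + 1 - m by omega, neg_sub_neg, sub_self]

end

lemma polyB_row {m : ℕ} (i : Fin m) :
    polyB m i =
      if (i : ℕ) = 0 then Pi.single ⟨m - 1, Nat.sub_one_lt_of_lt i.2⟩ 1
      else Pi.single ⟨i - 1, Nat.sub_lt_of_lt i.2⟩ 1 -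
        Pi.single ⟨m - 1, Nat.sub_one_lt_of_lt i.2⟩ 1 := by
  ext l
  have := l.2
  split_ifs <;> simp only [polyB, Matrix.of_apply, Pi.single_apply, Pi.sub_apply, Fin.ext_iff] <;>
    split_ifs <;> omega

lemma polyB_mul_apply {m : ℕ} (M : Matrix (Fin m) (Fin m) ℤ) (i j : Fin m) :
    (polyB m * M) i j = if (i : ℕ) = 0 then M ⟨m - 1, Nat.sub_one_lt_of_lt i.2⟩ j
      else M ⟨i - 1, Nat.sub_lt_of_lt i.2⟩ j - M ⟨m - 1, Nat.sub_one_lt_of_lt i.2⟩ j := by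
  rw [Matrix.mul_apply', polyB_row]
  split_ifs <;> simp [sub_dotProduct, single_dotProduct]

/- Column `j` of `Bᵏ` is `B^(j + k) e₀`, and `Bⁿ e₀` is `eₙ` for `n < m`, `2 e₀ - 𝟙` for `n = m`,
and `2 e_(n-m) - e_(n-m-1)` for `m < n < 2m`. -/
lemma polyB_pow_apply {m k : ℕ} (hk : k ≤ m) (i j : Fin m) :
    (polyB m ^ k) i j =
      if j + k < m then (if (i : ℕ) = j + k then 1 else 0)
      else (if (i : ℕ) + m = j + k then 2 else 0) -
        (if j + k = m then 1 else if (i : ℕ) + m + 1 = j + k then 1 else 0) := by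
  induction k generalizing i with
  | zero =>
    have := j.2
    simp only [pow_zero, Matrix.one_apply, Fin.ext_iff, add_zero]
    split_ifs <;> omega
  | succ k ih =>
    have := i.2
    have := j.2
    rw [pow_succ', polyB_mul_apply]
    simp only [ih (by omega)]
    split_ifs <;> omega

lemma sum_range_polyB_pow_succ (m : ℕ) : ∑ k ∈ range m, polyB m ^ (k + 1) = 1 := by
  ext i j
  have := i.2
  have := j.2
  have hentry : ∀ k ∈ range m, (polyB m ^ (k + 1)) i j =
      (if (i : ℕ) = j + (k + 1) then 1 else 0) + (if (i : ℕ) + m = j + (k + 1) then 2 else 0) -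
        (if m = j + (k + 1) then 1 else 0) -
        (if (i : ℕ) + m + 1 = j + (k + 1) then 1 else 0) := by
    intro k hk
    rw [polyB_pow_apply (mem_range.1 hk)]
    split_ifs <;> omega
  rw [Matrix.sum_apply, sum_congr rfl hentry]
  simp only [sum_add_distrib, sum_sub_distrib, sum_range_ite_eq_add_succ, Matrix.one_apply,
    Fin.ext_iff]
  split_ifs <;> omega

lemma trace_polyB_pow_of_pos_of_lt {m k : ℕ} (hk : 0 < k) (hkm : k < m) :
    (polyB m ^ k).trace = -1 := by
  have hdiag : ∀ i : Fin m, (polyB m ^ k) i i = if i = ⟨m - k, by omega⟩ then -1 else 0 := by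
    intro i
    have := i.2
    rw [polyB_pow_apply hkm.le]
    simp only [Fin.ext_iff]
    split_ifs <;> omega
  simp [Matrix.trace, hdiag]

open PowerSeries in
theorem inverted_polynacci_ogf (m : ℕ) (hm : 1 ≤ m) :
    (PowerSeries.mk fun n => -((polyB m) ^ (n + 1)).trace) *
        (1 + (∑ j ∈ Finset.Icc 1 (m - 1), (X : ℤ⟦X⟧) ^ j) - (X : ℤ⟦X⟧) ^ m) =
      (∑ j ∈ Finset.Icc 1 (m - 1), PowerSeries.C (R := ℤ) (j : ℤ) * (X : ℤ⟦X⟧) ^ (j - 1)) -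
        PowerSeries.C (R := ℤ) (m : ℤ) * (X : ℤ⟦X⟧) ^ (m - 1) := by
  rw [one_add_sum_Icc_pow_eq_sum_range _ hm]
  ext n
  rw [coeff_sum_Icc_C_mul_X_pow_sub]
  refine coeff_mk_neg_mul_geom_sub_X_pow (t := fun k => (polyB m ^ k).trace) (by simp)
    (fun k hk hkm => trace_polyB_pow_of_pos_of_lt hk hkm) (fun d => ?_) n
  rw [← Matrix.trace_sum, sum_range_pow_add_succ_eq_pow (sum_range_polyB_pow_succ m)]
end
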